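/- arXiv:2311.02204 — 5 statements merged into one kernel-verified Lean document; each statement's English description precedes it below -/
import Mathlib

section
/- The set S = [0,1]^{2N} is forward invariant for the network actSIS dynamics: if the initial condition (p(0), p_s(0)) lies in S, then the solution (p(t), p_s(t)) remains in S for all t ≥ 0. -/
/-! Let `V` be the squared Euclidean distance from the state `x` to the box and `π x` the nearest
point of the box. Then `V' = 2 ⟪x - π x, F x⟫`. The field points into the box at `π x` (a
coordinate sitting at `0` cannot decrease, one sitting at `1` cannot increase), so
`⟪x - π x, F (π x)⟫ ≤ 0`, and the Lipschitz bound for `F` on the compact region visited up to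
time `T` gives `V' ≤ L V` there. Since `V(0) = 0`, Grönwall's inequality forces `V = 0`. -/

open Set Filter Topology NNReal

section Lattice

variable {α : Type*} [Lattice α]

lemma max_min_mem_Icc {a b : α} (hab : a ≤ b) (x : α) : max a (min b x) ∈ Icc a b :=
  ⟨le_sup_left, sup_le hab inf_le_left⟩

variable [AddGroup α]

/-- `x` minus its nearest point in `[a, b]` (for `a ≤ b`); on functions it acts coordinatewise,
measuring the displacement from a box. -/
def overshoot (a b x : α) : α := x - max a (min b x)

lemma overshoot_eq_zero_iff {a b x : α} (hab : a ≤ b) : overshoot a b x = 0 ↔ x ∈ Icc a b := by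
  rw [overshoot, sub_eq_zero]
  refine ⟨fun h => h ▸ max_min_mem_Icc hab x, fun ⟨hax, hxb⟩ => ?_⟩
  rw [inf_eq_right.2 hxb, sup_eq_right.2 hax]

end Lattice

lemma hasDerivAt_overshoot_sq {a b : ℝ} (hab : a ≤ b) (x : ℝ) :
    HasDerivAt (fun y => overshoot a b y ^ 2) (2 * overshoot a b x) x := by
  rcases lt_or_ge x a with hxa | hax
  · have hloc : (fun y => overshoot a b y ^ 2) =ᶠ[𝓝 x] fun y => (y - a) ^ 2 := by
      filter_upwards [eventually_lt_nhds hxa] with y hy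
      rw [overshoot, min_eq_right (hy.le.trans hab), max_eq_left hy.le]
    have hx : overshoot a b x = x - a := by
      rw [overshoot, min_eq_right (hxa.le.trans hab), max_eq_left hxa.le]
    rw [hx]
    simpa using ((hasDerivAt_id x).sub_const a).pow 2 |>.congr_of_eventuallyEq hloc
  rcases lt_or_ge b x with hbx | hxb
  · have hloc : (fun y => overshoot a b y ^ 2) =ᶠ[𝓝 x] fun y => (y - b) ^ 2 := by
      filter_upwards [eventually_gt_nhds hbx] with y hy
      rw [overshoot, min_eq_left hy.le, max_eq_right hab]
    have hx : overshoot a b x = x - b := by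
      rw [overshoot, min_eq_left hbx.le, max_eq_right hab]
    rw [hx]
    simpa using ((hasDerivAt_id x).sub_const b).pow 2 |>.congr_of_eventuallyEq hloc
  have hx : overshoot a b x = 0 := (overshoot_eq_zero_iff hab).2 ⟨hax, hxb⟩
  -- `max a (min b y)` is the point of `[a, b]` nearest to `y`, so it is at least as close as `x`
  have hnear : ∀ y, |overshoot a b y| ≤ |y - x| := fun y => by grind [overshoot]
  rw [hasDerivAt_iff_isLittleO, hx]
  simp only [ne_eq, OfNat.ofNat_ne_zero, not_false_eq_true, zero_pow, sub_zero, mul_zero,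
    smul_zero]
  refine Asymptotics.IsBigO.trans_isLittleO ?_ (Asymptotics.isLittleO_pow_sub_sub x one_lt_two)
  refine Asymptotics.IsBigO.of_bound 1 (Eventually.of_forall fun y => ?_)
  simp only [norm_pow, Real.norm_eq_abs, one_mul, abs_abs]
  exact pow_le_pow_left₀ (abs_nonneg _) (hnear y) 2

lemma overshoot_mul_nonpos {a b x u : ℝ} (hab : a ≤ b)
    (ha : max a (min b x) = a → 0 ≤ u) (hb : max a (min b x) = b → u ≤ 0) :
    overshoot a b x * u ≤ 0 := by
  rcases le_total x a with hxa | hax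
  · exact mul_nonpos_of_nonpos_of_nonneg (by grind [overshoot]) (ha (by grind))
  rcases le_total x b with hxb | hbx
  · simp [overshoot, min_eq_right hxb, max_eq_right hax]
  · exact mul_nonpos_of_nonneg_of_nonpos (by grind [overshoot]) (hb (by grind))

lemma nonpos_of_hasDerivAt_le_mul {f f' : ℝ → ℝ} {K a b : ℝ}
    (hf : ∀ t ∈ Icc a b, HasDerivAt f (f' t) t) (ha : f a ≤ 0)
    (hle : ∀ t ∈ Ico a b, f' t ≤ K * f t) : ∀ t ∈ Icc a b, f t ≤ 0 := by
  intro t ht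
  simpa [gronwallBound_ε0_δ0] using le_gronwallBound_of_liminf_deriv_right_le (K := K) (ε := 0)
    (fun s hs => (hf s hs).continuousAt.continuousWithinAt)
    (fun s hs _ hr => (hf s (Ico_subset_Icc_self hs)).hasDerivWithinAt.liminf_right_slope_le hr)
    ha (fun s hs => by simpa using hle s hs) t ht

section Box

variable {ι : Type*} [Fintype ι]

lemma norm_le_sum_abs (e : ι → ℝ) : ‖e‖ ≤ ∑ i, |e i| :=
  (pi_norm_le_iff_of_nonneg (Finset.sum_nonneg fun i _ => abs_nonneg (e i))).2 fun i =>
    Finset.single_le_sum (f := fun i => |e i|) (fun i _ => abs_nonneg (e i)) (Finset.mem_univ i)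

def InwardOnIcc (F : (ι → ℝ) → ι → ℝ) (a b : ι → ℝ) : Prop :=
  ∀ y ∈ Icc a b, ∀ i, (y i = a i → 0 ≤ F y i) ∧ (y i = b i → F y i ≤ 0)

lemma InwardOnIcc.sum_overshoot_mul_le {a b y : ι → ℝ} {F : (ι → ℝ) → ι → ℝ} {K : ℝ≥0}
    {s : Set (ι → ℝ)} (hF : InwardOnIcc F a b) (hab : a ≤ b) (hFs : LipschitzOnWith K F s)
    (hy : y ∈ s) (hcy : max a (min b y) ∈ s) :
    ∑ i, overshoot a b y i * F y i ≤ K * Fintype.card ι * ∑ i, overshoot a b y i ^ 2 := by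
  set e := overshoot a b y
  set c := max a (min b y)
  have hc : c ∈ Icc a b := max_min_mem_Icc hab y
  have hinward : ∀ i, e i * F c i ≤ 0 := fun i =>
    overshoot_mul_nonpos (hab i) (hF c hc i).1 (hF c hc i).2
  have hlip : ∀ i, |F y i - F c i| ≤ K * ∑ k, |e k| := fun i =>
    calc |F y i - F c i| ≤ ‖F y - F c‖ := norm_le_pi_norm (F y - F c) i
      _ ≤ K * ‖y - c‖ := by simpa only [dist_eq_norm] using hFs.dist_le_mul y hy c hcy
      _ ≤ K * ∑ k, |e k| := by gcongr; exact norm_le_sum_abs e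
  calc ∑ i, e i * F y i = ∑ i, (e i * F c i + e i * (F y i - F c i)) := by
        congr! 1 with i; ring
    _ ≤ ∑ i, |e i| * (K * ∑ k, |e k|) := by
        gcongr with i
        have hdiff : e i * (F y i - F c i) ≤ |e i| * (K * ∑ k, |e k|) :=
          calc _ ≤ |e i| * |F y i - F c i| := (le_abs_self _).trans (abs_mul _ _).le
            _ ≤ _ := by gcongr; exact hlip i
        linarith [hinward i]
    _ = K * (∑ i, |e i|) ^ 2 := by rw [← Finset.sum_mul]; ring
    _ ≤ K * (Fintype.card ι * ∑ i, |e i| ^ 2) := by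
        gcongr; exact sq_sum_le_card_mul_sum_sq
    _ = K * Fintype.card ι * ∑ i, e i ^ 2 := by simp only [sq_abs]; ring

theorem InwardOnIcc.mem_Icc_of_hasDerivAt {a b : ι → ℝ} {F : (ι → ℝ) → ι → ℝ}
    {x : ℝ → ι → ℝ} {t₀ : ℝ} (hF : InwardOnIcc F a b) (hFlip : LocallyLipschitz F)
    (hx : ∀ t ≥ t₀, HasDerivAt x (F (x t)) t) (ht₀ : x t₀ ∈ Icc a b) :
    ∀ t ≥ t₀, x t ∈ Icc a b := by
  intro T hT
  have hab : a ≤ b := ht₀.1.trans ht₀.2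
  set V : ℝ → ℝ := fun t => ∑ i, overshoot a b (x t) i ^ 2
  have hV : ∀ t ≥ t₀, HasDerivAt V (2 * ∑ i, overshoot a b (x t) i * F (x t) i) t := by
    intro t ht
    rw [Finset.mul_sum]
    refine HasDerivAt.fun_sum fun i _ => ?_
    rw [← mul_assoc]
    exact (hasDerivAt_overshoot_sq (hab i) (x t i)).comp t (hasDerivAt_pi.1 (hx t ht) i)
  -- `F` is only locally Lipschitz, so we work on the compact region visited up to time `T`
  set s := x '' Icc t₀ T ∪ Icc a b
  have hs : IsCompact s :=
    (isCompact_Icc.image_of_continuousOn fun t ht =>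
      (hx t ht.1).continuousAt.continuousWithinAt).union isCompact_Icc
  obtain ⟨K, hK⟩ := hFlip.locallyLipschitzOn.exists_lipschitzOnWith_of_compact hs
  have hVT : V T ≤ 0 := by
    refine nonpos_of_hasDerivAt_le_mul (K := 2 * K * Fintype.card ι)
      (fun t ht => hV t ht.1) ?_ ?_ T ⟨hT, le_rfl⟩
    · simp [V, (overshoot_eq_zero_iff hab).2 ht₀]
    · intro t ht
      have := hF.sum_overshoot_mul_le hab hK (.inl ⟨t, Ico_subset_Icc_self ht, rfl⟩)
        (.inr (max_min_mem_Icc hab (x t)))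
      simp only [V]; linarith
  have hsq : ∀ i, overshoot a b (x T) i ^ 2 = 0 :=
    fun i => (Finset.sum_eq_zero_iff_of_nonneg fun i _ => sq_nonneg _).1
      (hVT.antisymm (Finset.sum_nonneg fun i _ => sq_nonneg _)) i (Finset.mem_univ i)
  exact (overshoot_eq_zero_iff hab).1 (funext fun i => pow_eq_zero_iff two_ne_zero |>.1 (hsq i))

end Box

section actSIS

variable {ι : Type*} [Fintype ι]

noncomputable def actSISField (A Ahat : Matrix ι ι ℝ) (β : ℝ) (δ : ι → ℝ) (τ : ℝ) (dhat : ι → ℝ)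
    (α : ι → ℝ → ℝ) (z : ι ⊕ ι → ℝ) : ι ⊕ ι → ℝ :=
  Sum.elim
    (fun j => (1 - z (.inl j)) * β * α j (z (.inr j)) * (∑ k, A j k * z (.inl k))
      - δ j * z (.inl j))
    (fun j => (-z (.inr j) + (∑ k, Ahat j k * z (.inl k)) / dhat j) / τ)

lemma contDiff_actSISField {A Ahat : Matrix ι ι ℝ} {β : ℝ} {δ : ι → ℝ} {τ : ℝ}
    {dhat : ι → ℝ} {α : ι → ℝ → ℝ} (hα : ∀ j, ContDiff ℝ 1 (α j)) :
    ContDiff ℝ 1 (actSISField A Ahat β δ τ dhat α) := by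
  refine contDiff_pi.2 fun i => ?_
  rcases i with j | j
  · have := hα j
    simp only [actSISField, Sum.elim_inl]
    fun_prop
  · simp only [actSISField, Sum.elim_inr]
    fun_prop

lemma inwardOnIcc_actSISField {A Ahat : Matrix ι ι ℝ} {β : ℝ} {δ : ι → ℝ} {τ : ℝ}
    {dhat : ι → ℝ} {α : ι → ℝ → ℝ} (hA : ∀ j k, 0 ≤ A j k) (hAhat : ∀ j k, 0 ≤ Ahat j k)
    (hβ : 0 ≤ β) (hδ : ∀ j, 0 ≤ δ j) (hτ : 0 ≤ τ) (hdhat : ∀ j, dhat j = ∑ k, Ahat j k)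
    (hα : ∀ j, ∀ x ∈ Icc (0 : ℝ) 1, α j x ∈ Icc (0 : ℝ) 1) :
    InwardOnIcc (actSISField A Ahat β δ τ dhat α) 0 1 := by
  intro y hy i
  have hy0 : ∀ k, 0 ≤ y k := hy.1
  have hy1 : ∀ k, y k ≤ 1 := hy.2
  rcases i with j | j
  · have hαj := (hα j _ ⟨hy0 (.inr j), hy1 (.inr j)⟩).1
    have hsum : 0 ≤ ∑ k, A j k * y (.inl k) :=
      Finset.sum_nonneg fun k _ => mul_nonneg (hA j k) (hy0 _)
    refine ⟨fun h0 => ?_, fun h1 => ?_⟩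
    · simp only [actSISField, Sum.elim_inl, Pi.zero_apply] at h0 ⊢
      rw [h0, sub_zero, mul_zero, sub_zero, one_mul]
      exact mul_nonneg (mul_nonneg hβ hαj) hsum
    · simp only [actSISField, Sum.elim_inl, Pi.one_apply] at h1 ⊢
      rw [h1, sub_self, zero_mul, zero_mul, zero_mul, zero_sub, mul_one]
      exact neg_nonpos.2 (hδ j)
  · have hsum0 : 0 ≤ ∑ k, Ahat j k * y (.inl k) :=
      Finset.sum_nonneg fun k _ => mul_nonneg (hAhat j k) (hy0 _)
    have hsum1 : ∑ k, Ahat j k * y (.inl k) ≤ dhat j := hdhat j ▸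
      Finset.sum_le_sum fun k _ => mul_le_of_le_one_right (hAhat j k) (hy1 _)
    have hdhat0 : 0 ≤ dhat j := hsum0.trans hsum1
    refine ⟨fun h0 => ?_, fun h1 => ?_⟩
    · simp only [actSISField, Sum.elim_inr, Pi.zero_apply] at h0 ⊢
      rw [h0, neg_zero, zero_add]
      exact div_nonneg (div_nonneg hsum0 hdhat0) hτ
    · simp only [actSISField, Sum.elim_inr, Pi.one_apply] at h1 ⊢
      rw [h1]
      exact div_nonpos_of_nonpos_of_nonneg
        (neg_add_nonpos_iff.2 (div_le_one_of_le₀ hsum1 hdhat0)) hτ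

end actSIS

theorem actSIS_forward_invariance_general
    (N : ℕ) (A Ahat : Matrix (Fin N) (Fin N) ℝ)
    (hA : ∀ j k, 0 ≤ A j k) (hAhat : ∀ j k, 0 ≤ Ahat j k)
    (β : ℝ) (hβ : 0 < β)
    (δ : Fin N → ℝ) (hδ : ∀ j, 0 < δ j)
    (τ : ℝ) (hτ : 0 < τ)
    (dhat : Fin N → ℝ) (hdhat : ∀ j, dhat j = ∑ k, Ahat j k)
    (α : Fin N → ℝ → ℝ)
    (hαrange : ∀ j, ∀ x ∈ Icc (0:ℝ) 1, α j x ∈ Icc (0:ℝ) 1)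
    (hαC1 : ∀ j, ContDiff ℝ 1 (α j))
    (p ps : ℝ → Fin N → ℝ)
    (hp : ∀ t, ∀ j, HasDerivAt (fun s => p s j)
      ((1 - p t j) * β * α j (ps t j) * (∑ k, A j k * p t k) - δ j * p t j) t)
    (hps : ∀ t, ∀ j, HasDerivAt (fun s => ps s j)
      ((-(ps t j) + (∑ k, Ahat j k * p t k) / dhat j) / τ) t)
    (hinit : ∀ j, p 0 j ∈ Icc (0:ℝ) 1 ∧ ps 0 j ∈ Icc (0:ℝ) 1) :
    ∀ t ≥ (0:ℝ), ∀ j, p t j ∈ Icc (0:ℝ) 1 ∧ ps t j ∈ Icc (0:ℝ) 1 := by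
  set z : ℝ → Fin N ⊕ Fin N → ℝ := fun t => Sum.elim (p t) (ps t)
  have hz : ∀ t ≥ 0, HasDerivAt z (actSISField A Ahat β δ τ dhat α (z t)) t := fun t _ =>
    hasDerivAt_pi.2 fun i => by rcases i with j | j; exacts [hp t j, hps t j]
  have hz0 : z 0 ∈ Icc 0 1 := by
    constructor <;> intro i <;> rcases i with j | j
    exacts [(hinit j).1.1, (hinit j).2.1, (hinit j).1.2, (hinit j).2.2]
  have hinv := (inwardOnIcc_actSISField hA hAhat hβ.le (fun j => (hδ j).le) hτ.le hdhat
    hαrange).mem_Icc_of_hasDerivAt (contDiff_actSISField hαC1).locallyLipschitz hz hz0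
  intro t ht j
  exact ⟨⟨(hinv t ht).1 (.inl j), (hinv t ht).2 (.inl j)⟩,
    ⟨(hinv t ht).1 (.inr j), (hinv t ht).2 (.inr j)⟩⟩

/-- Forward invariance of `[0,1]^{2N}` for the network actSIS dynamics. -/
theorem actSIS_forward_invariance
    (N : ℕ) (A Ahat : Matrix (Fin N) (Fin N) ℝ)
    (hA : ∀ j k, 0 ≤ A j k) (hAhat : ∀ j k, 0 ≤ Ahat j k)
    (β : ℝ) (hβ : 0 < β)
    (δ : Fin N → ℝ) (hδ : ∀ j, 0 < δ j)
    (τ : ℝ) (hτ : 0 < τ)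
    (dhat : Fin N → ℝ) (hdhat : ∀ j, dhat j = ∑ k, Ahat j k)
    (hdhatpos : ∀ j, 0 < dhat j)
    (α : Fin N → ℝ → ℝ)
    (hαrange : ∀ j, ∀ x ∈ Icc (0:ℝ) 1, α j x ∈ Icc (0:ℝ) 1)
    (hαC1 : ∀ j, ContDiff ℝ 1 (α j))
    (hαbdd : ∀ j, ∃ C : ℝ, ∀ x ∈ Icc (0:ℝ) 1, |deriv (α j) x| ≤ C)
    (p ps : ℝ → Fin N → ℝ)
    (hp : ∀ t, ∀ j, HasDerivAt (fun s => p s j)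
      ((1 - p t j) * β * α j (ps t j) * (∑ k, A j k * p t k) - δ j * p t j) t)
    (hps : ∀ t, ∀ j, HasDerivAt (fun s => ps s j)
      ((-(ps t j) + (∑ k, Ahat j k * p t k) / dhat j) / τ) t)
    (hinit : ∀ j, p 0 j ∈ Icc (0:ℝ) 1 ∧ ps 0 j ∈ Icc (0:ℝ) 1) :
    ∀ t ≥ (0:ℝ), ∀ j, p t j ∈ Icc (0:ℝ) 1 ∧ ps t j ∈ Icc (0:ℝ) 1 :=
  actSIS_forward_invariance_general N A Ahat hA hAhat β hβ δ hδ τ hτ dhat hdhat α hαrange hαC1 p ps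
    hp hps hinit
end

section
/- Let A be an irreducible nonnegative N×N matrix, D a positive diagonal matrix, and β̄ > 0. The Metzler matrix -D + β̄ A has its largest real-part eigenvalue negative if and only if β̄ ρ(A D⁻¹) < 1, and equal to zero if and only if β̄ ρ(A D⁻¹) = 1, where ρ denotes spectral radius. -/
open Set

/-- The largest real part among the (complex) eigenvalues of a real square matrix. -/
noncomputable def specRealBound {N : ℕ} (M : Matrix (Fin N) (Fin N) ℝ) : ℝ :=
  sSup (Complex.re '' spectrum ℂ (M.map (Complex.ofReal : ℝ → ℂ)))

/-- The spectral radius of a real square matrix. -/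
noncomputable def specRadius {N : ℕ} (M : Matrix (Fin N) (Fin N) ℝ) : ℝ :=
  sSup ((fun z : ℂ => ‖z‖) '' spectrum ℂ (M.map (Complex.ofReal : ℝ → ℂ)))

/-- An entrywise-nonnegative matrix is irreducible if every pair of indices is
connected by a positive-weight path. -/
def MatIrreducible {N : ℕ} (M : Matrix (Fin N) (Fin N) ℝ) : Prop :=
  ∀ i j, ∃ n : ℕ, 0 < n ∧ 0 < (M ^ n) i j

/-!
Put `M = -D + β A` and `C = A D⁻¹`, so that `M = (β C - 1) D`. The Collatz–Wielandt bound says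
that `r • w ≤ B *ᵥ w` for a nonnegative matrix `B` and a nonzero `w ≥ 0` forces `r ≤ ρ(B)`:
iterating gives `r ^ k ≤ ‖B ^ k‖`, and Gelfand's formula applies. Shifting a Metzler matrix by
`c • 1` makes it nonnegative, and as `c → ∞` the largest `‖μ + c‖ - c` over the spectrum tends to
the largest `re μ`; so `ε • x ≤ M *ᵥ x` forces `ε ≤ s(M)` as well.

If `μ` is an eigenvalue of `M` with `re μ = s(M) ≥ 0` and eigenvector `v`, then `w = D |v|`
satisfies `(1 + s(M) / max δ) • w ≤ β C w`. If `z` is an eigenvalue of `C` with `‖z‖ = ρ(C)` and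
eigenvector `v`, then `x = D⁻¹ |v|` satisfies `(min δ) (β ρ(C) - 1) • x ≤ M x`. These two bounds
tie the sign of `s(M)` to that of `β ρ(C) - 1`.
-/

open Matrix Filter

attribute [local instance] Matrix.linftyOpNormedAddCommGroup Matrix.linftyOpNormedRing
  Matrix.linftyOpNormedAlgebra

section Nonneg

variable {n : Type*} [Fintype n]

theorem Matrix.exists_mulVec_eq_smul_of_mem_spectrum [DecidableEq n] {K : Type*} [Field K]
    {A : Matrix n n K} {μ : K} (h : μ ∈ spectrum K A) : ∃ v ≠ 0, A *ᵥ v = μ • v := by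
  rw [← Matrix.spectrum_toLin', ← Module.End.hasEigenvalue_iff_mem_spectrum] at h
  obtain ⟨v, hv⟩ := h.exists_hasEigenvector
  exact ⟨v, hv.2, by simpa only [Matrix.toLin'_apply] using hv.apply_eq_smul⟩

theorem Matrix.mulVec_mono_of_nonneg {B : Matrix n n ℝ} (hB : ∀ i j, 0 ≤ B i j) {u w : n → ℝ}
    (h : u ≤ w) : B *ᵥ u ≤ B *ᵥ w := fun i =>
  Finset.sum_le_sum fun j _ => mul_le_mul_of_nonneg_left (h j) (hB i j)

theorem Matrix.norm_map_ofReal_mulVec_apply_le {B : Matrix n n ℝ} (hB : ∀ i j, 0 ≤ B i j)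
    (v : n → ℂ) (i : n) : ‖(B.map Complex.ofReal *ᵥ v) i‖ ≤ (B *ᵥ fun j => ‖v j‖) i := by
  refine (norm_sum_le _ _).trans_eq (Finset.sum_congr rfl fun j _ => ?_)
  simp only [map_apply, norm_mul, Complex.norm_real, Real.norm_of_nonneg (hB i j)]

theorem Matrix.linfty_opNorm_map_ofReal (B : Matrix n n ℝ) : ‖B.map Complex.ofReal‖ = ‖B‖ := by
  simp [linfty_opNorm_def]

theorem Matrix.pow_le_linfty_opNorm_pow_of_smul_le_mulVec [DecidableEq n] {B : Matrix n n ℝ}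
    (hB : ∀ i j, 0 ≤ B i j) {w : n → ℝ} (hw : 0 ≤ w) (hw0 : w ≠ 0) {r : ℝ} (hr : 0 ≤ r)
    (h : r • w ≤ B *ᵥ w) (k : ℕ) : r ^ k ≤ ‖B ^ k‖ := by
  have hpow : r ^ k • w ≤ B ^ k *ᵥ w := by
    induction k with
    | zero => simp
    | succ k ih =>
      calc r ^ (k + 1) • w = r ^ k • (r • w) := by rw [pow_succ, mul_smul]
        _ ≤ r ^ k • (B *ᵥ w) := smul_le_smul_of_nonneg_left h (pow_nonneg hr k)
        _ = B *ᵥ (r ^ k • w) := (mulVec_smul _ _ _).symm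
        _ ≤ B *ᵥ (B ^ k *ᵥ w) := mulVec_mono_of_nonneg hB ih
        _ = B ^ (k + 1) *ᵥ w := by rw [mulVec_mulVec, pow_succ']
  have hnorm : ‖r ^ k • w‖ ≤ ‖B ^ k *ᵥ w‖ := by
    refine (pi_norm_le_iff_of_nonneg (norm_nonneg _)).2 fun i => ?_
    refine le_trans ?_ (norm_le_pi_norm _ i)
    have h0 : 0 ≤ (r ^ k • w) i := mul_nonneg (pow_nonneg hr k) (hw i)
    rw [Real.norm_of_nonneg h0, Real.norm_of_nonneg (h0.trans (hpow i))]
    exact hpow i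
  rw [norm_smul, Real.norm_of_nonneg (pow_nonneg hr k)] at hnorm
  exact le_of_mul_le_mul_right (hnorm.trans (linfty_opNorm_mulVec _ _)) (norm_pos_iff.2 hw0)

theorem Matrix.ofReal_le_spectralRadius_of_smul_le_mulVec [DecidableEq n] {B : Matrix n n ℝ}
    (hB : ∀ i j, 0 ≤ B i j) {w : n → ℝ} (hw : 0 ≤ w) (hw0 : w ≠ 0) {r : ℝ} (hr : 0 ≤ r)
    (h : r • w ≤ B *ᵥ w) : ENNReal.ofReal r ≤ spectralRadius ℂ (B.map Complex.ofReal) := by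
  refine ge_of_tendsto (spectrum.pow_norm_pow_one_div_tendsto_nhds_spectralRadius _) ?_
  filter_upwards [eventually_gt_atTop 0] with k hk
  refine ENNReal.ofReal_le_ofReal ?_
  have hmap : B.map Complex.ofReal ^ k = (B ^ k).map Complex.ofReal :=
    (map_pow Complex.ofRealHom.mapMatrix B k).symm
  rw [hmap, linfty_opNorm_map_ofReal, one_div,
    Real.le_rpow_inv_iff_of_pos hr (norm_nonneg _) (by exact_mod_cast hk), Real.rpow_natCast]
  exact pow_le_linfty_opNorm_pow_of_smul_le_mulVec hB hw hw0 hr h k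

end Nonneg

section Spectrum

variable {N : ℕ}

theorem le_sSup_image_spectrum (M : Matrix (Fin N) (Fin N) ℝ) (f : ℂ → ℝ) {μ : ℂ}
    (hμ : μ ∈ spectrum ℂ (M.map Complex.ofReal)) :
    f μ ≤ sSup (f '' spectrum ℂ (M.map Complex.ofReal)) :=
  le_csSup ((Matrix.finite_spectrum _).image f).bddAbove (mem_image_of_mem f hμ)

theorem exists_mem_spectrum_eq_sSup (hN : 0 < N) (M : Matrix (Fin N) (Fin N) ℝ) (f : ℂ → ℝ) :
    ∃ μ ∈ spectrum ℂ (M.map Complex.ofReal),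
      f μ = sSup (f '' spectrum ℂ (M.map Complex.ofReal)) :=
  have : Nonempty (Fin N) := ⟨⟨0, hN⟩⟩
  ((spectrum.nonempty _).image f).csSup_mem ((Matrix.finite_spectrum _).image f)

theorem specRadius_nonneg (B : Matrix (Fin N) (Fin N) ℝ) : 0 ≤ specRadius B :=
  Real.sSup_nonneg fun _ ⟨z, _, hz⟩ => hz ▸ norm_nonneg z

theorem spectralRadius_map_ofReal_le (B : Matrix (Fin N) (Fin N) ℝ) :
    spectralRadius ℂ (B.map Complex.ofReal) ≤ ENNReal.ofReal (specRadius B) :=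
  iSup₂_le fun z hz => by
    rw [← ENNReal.ofReal_coe_nnreal, coe_nnnorm]
    exact ENNReal.ofReal_le_ofReal (le_sSup_image_spectrum B (‖·‖) hz)

theorem le_specRadius_of_smul_le_mulVec {B : Matrix (Fin N) (Fin N) ℝ} (hB : ∀ i j, 0 ≤ B i j)
    {w : Fin N → ℝ} (hw : 0 ≤ w) (hw0 : w ≠ 0) {r : ℝ} (hr : 0 ≤ r) (h : r • w ≤ B *ᵥ w) :
    r ≤ specRadius B :=
  (ENNReal.ofReal_le_ofReal_iff (specRadius_nonneg B)).1 <|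
    (ofReal_le_spectralRadius_of_smul_le_mulVec hB hw hw0 hr h).trans
      (spectralRadius_map_ofReal_le B)

theorem exists_nonneg_specRadius_smul_le_mulVec (hN : 0 < N) {B : Matrix (Fin N) (Fin N) ℝ}
    (hB : ∀ i j, 0 ≤ B i j) : ∃ u, 0 ≤ u ∧ u ≠ 0 ∧ specRadius B • u ≤ B *ᵥ u := by
  obtain ⟨z, hz, hzρ⟩ := exists_mem_spectrum_eq_sSup hN B (‖·‖)
  obtain ⟨v, hv0, hv⟩ := exists_mulVec_eq_smul_of_mem_spectrum hz
  refine ⟨fun j => ‖v j‖, fun j => norm_nonneg _, fun h => hv0 ?_, fun i => ?_⟩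
  · exact funext fun j => norm_eq_zero.1 (congrFun h j)
  · calc specRadius B * ‖v i‖ = ‖(B.map Complex.ofReal *ᵥ v) i‖ := by
          rw [hv, Pi.smul_apply, smul_eq_mul, norm_mul, hzρ]; rfl
      _ ≤ _ := norm_map_ofReal_mulVec_apply_le hB v i

end Spectrum

theorem Complex.eventually_norm_add_ofReal_lt {μ : ℂ} {ε : ℝ} (h : μ.re < ε) :
    ∀ᶠ c : ℝ in atTop, ‖μ + c‖ < ε + c := by
  -- for `ε + c > 0`, squaring turns the claim into `re² + im² - ε² < 2 c (ε - re)`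
  filter_upwards [eventually_gt_atTop (-ε),
    eventually_gt_atTop ((μ.re ^ 2 + μ.im ^ 2 - ε ^ 2) / (2 * (ε - μ.re)))] with c hc hc'
  rw [div_lt_iff₀ (by linarith)] at hc'
  refine lt_of_pow_lt_pow_left₀ 2 (by linarith) ?_
  rw [Complex.sq_norm, Complex.normSq_apply]
  simp only [add_re, ofReal_re, add_im, ofReal_im, add_zero]
  nlinarith

section Shift

variable {n : Type*} [Fintype n] [DecidableEq n]

theorem Matrix.add_algebraMap_apply_nonneg {M : Matrix n n ℝ} (hM : ∀ i j, i ≠ j → 0 ≤ M i j)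
    {c : ℝ} (hc : ∑ i, |M i i| ≤ c) (i j : n) : 0 ≤ (M + algebraMap ℝ _ c) i j := by
  rw [algebraMap_eq_diagonal, Matrix.add_apply]
  rcases eq_or_ne i j with rfl | hij
  · have := Finset.single_le_sum (fun j _ => abs_nonneg (M j j)) (Finset.mem_univ i)
    simp only [diagonal_apply_eq, Pi.algebraMap_apply, Algebra.algebraMap_self, RingHom.id_apply]
    linarith [neg_abs_le (M i i)]
  · simpa [diagonal_apply_ne _ hij] using hM i j hij

theorem Matrix.add_algebraMap_mulVec (M : Matrix n n ℝ) (c : ℝ) (x : n → ℝ) :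
    (M + algebraMap ℝ _ c) *ᵥ x = M *ᵥ x + c • x := by
  rw [add_mulVec, algebraMap_eq_diagonal]
  exact congrArg _ (funext fun i => mulVec_diagonal _ _ _)

theorem Matrix.spectrum_map_ofReal_add_algebraMap (M : Matrix n n ℝ) (c : ℝ) :
    spectrum ℂ ((M + algebraMap ℝ _ c).map Complex.ofReal) =
      (· + (c : ℂ)) '' spectrum ℂ (M.map Complex.ofReal) := by
  rw [Matrix.map_add _ Complex.ofReal_add, map_algebraMap _ _ Complex.ofReal_zero rfl,
    IsScalarTower.algebraMap_apply ℝ ℂ, ← spectrum.add_singleton_eq, Set.add_singleton]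
  rfl

end Shift

theorem le_specRealBound_of_smul_le_mulVec {N : ℕ} {M : Matrix (Fin N) (Fin N) ℝ}
    (hM : ∀ i j, i ≠ j → 0 ≤ M i j) {x : Fin N → ℝ} (hx : 0 ≤ x) (hx0 : x ≠ 0) {ε : ℝ}
    (h : ε • x ≤ M *ᵥ x) : ε ≤ specRealBound M := by
  obtain ⟨μ, hμ, hεμ⟩ : ∃ μ ∈ spectrum ℂ (M.map Complex.ofReal), ε ≤ μ.re := by
    by_contra! hlt
    obtain ⟨c, hcμ, hcM, hcε⟩ := ((Matrix.finite_spectrum _).eventually_all.2 fun μ hμ =>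
      Complex.eventually_norm_add_ofReal_lt (hlt μ hμ)).and
        ((eventually_ge_atTop (∑ i, |M i i|)).and (eventually_ge_atTop (-ε))) |>.exists
    have hρ : ε + c ≤ specRadius (M + algebraMap ℝ _ c) := by
      refine le_specRadius_of_smul_le_mulVec (add_algebraMap_apply_nonneg hM hcM) hx hx0
        (by linarith) ?_
      rw [add_algebraMap_mulVec, add_smul]
      exact add_le_add_left h _
    have hN : 0 < N := by
      obtain ⟨i, -⟩ := Function.ne_iff.1 hx0
      exact i.pos
    obtain ⟨z, hz, hzρ⟩ := exists_mem_spectrum_eq_sSup hN (M + algebraMap ℝ _ c) (‖·‖)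
    rw [spectrum_map_ofReal_add_algebraMap] at hz
    obtain ⟨μ, hμ, rfl⟩ := hz
    exact (hcμ μ hμ).not_ge (hzρ ▸ hρ)
  exact hεμ.trans (le_sSup_image_spectrum M Complex.re hμ)

theorem Matrix.inv_diagonal_of_ne_zero {n K : Type*} [Fintype n] [DecidableEq n] [Field K]
    {v : n → K} (hv : ∀ i, v i ≠ 0) : (diagonal v)⁻¹ = diagonal v⁻¹ :=
  inv_eq_left_inv <| by
    rw [diagonal_mul_diagonal, ← diagonal_one]
    exact congrArg diagonal (funext fun i => inv_mul_cancel₀ (hv i))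

section Threshold

variable {N : ℕ} {A : Matrix (Fin N) (Fin N) ℝ} {δ : Fin N → ℝ} {β : ℝ}

theorem map_ofReal_mulVec_apply_of_eq_smul {v : Fin N → ℂ} {μ : ℂ}
    (hv : (-diagonal δ + β • A).map Complex.ofReal *ᵥ v = μ • v) (i : Fin N) :
    (μ + δ i) * v i = β * (A.map Complex.ofReal *ᵥ v) i := by
  have := congrFun hv i
  rw [Matrix.map_add _ Complex.ofReal_add, Matrix.map_neg _ Complex.ofReal_neg,
    diagonal_map Complex.ofReal_zero, Matrix.map_smul' _ _ _ Complex.ofReal_mul, add_mulVec,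
    neg_mulVec, smul_mulVec] at this
  simp only [Pi.add_apply, Pi.neg_apply, mulVec_diagonal, Pi.smul_apply,
    smul_eq_mul] at this
  linear_combination -this

theorem mul_inv_diagonal_apply_nonneg (hA : ∀ i j, 0 ≤ A i j) (hδ : ∀ j, 0 < δ j) (i j : Fin N) :
    0 ≤ (A * (diagonal δ)⁻¹) i j := by
  rw [inv_diagonal_of_ne_zero fun i => (hδ i).ne', mul_diagonal]
  exact mul_nonneg (hA i j) (inv_nonneg.2 (hδ j).le)

theorem neg_diagonal_add_smul_apply_nonneg (hA : ∀ i j, 0 ≤ A i j) (hβ : 0 ≤ β) (i j : Fin N)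
    (hij : i ≠ j) : 0 ≤ (-diagonal δ + β • A) i j := by
  simpa [diagonal_apply_ne _ hij] using mul_nonneg hβ (hA i j)

theorem one_add_specRealBound_div_le (hN : 0 < N) (hA : ∀ i j, 0 ≤ A i j) (hδ : ∀ j, 0 < δ j)
    (hβ : 0 < β) {K : ℝ} (hK : ∀ i, δ i ≤ K) (hs : 0 ≤ specRealBound (-diagonal δ + β • A)) :
    1 + specRealBound (-diagonal δ + β • A) / K ≤ β * specRadius (A * (diagonal δ)⁻¹) := by
  set s := specRealBound (-diagonal δ + β • A)
  have hK0 : 0 < K := (hδ ⟨0, hN⟩).trans_le (hK _)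
  obtain ⟨μ, hμ, hμs⟩ := exists_mem_spectrum_eq_sSup hN (-diagonal δ + β • A) Complex.re
  replace hμs : μ.re = s := hμs
  obtain ⟨v, hv0, hv⟩ := exists_mulVec_eq_smul_of_mem_spectrum hμ
  set u : Fin N → ℝ := fun j => ‖v j‖
  have hu : ∀ i, (s + δ i) * u i ≤ β * (A *ᵥ u) i := fun i =>
    calc (s + δ i) * u i ≤ ‖μ + δ i‖ * u i := by
          refine mul_le_mul_of_nonneg_right ?_ (norm_nonneg _)
          simpa [hμs] using Complex.re_le_norm (μ + δ i)
      _ = ‖(β : ℂ) * (A.map Complex.ofReal *ᵥ v) i‖ := by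
          rw [← norm_mul, map_ofReal_mulVec_apply_of_eq_smul hv]
      _ ≤ β * (A *ᵥ u) i := by
          rw [norm_mul, Complex.norm_real, Real.norm_of_nonneg hβ.le]
          exact mul_le_mul_of_nonneg_left (norm_map_ofReal_mulVec_apply_le hA v i) hβ.le
  have hCw : (A * (diagonal δ)⁻¹) *ᵥ (δ * u) = A *ᵥ u := by
    rw [inv_diagonal_of_ne_zero fun i => (hδ i).ne', ← mulVec_mulVec]
    refine congrArg _ (funext fun j => ?_)
    rw [mulVec_diagonal]
    exact inv_mul_cancel_left₀ (hδ j).ne' (u j)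
  rw [← div_le_iff₀' hβ]
  refine le_specRadius_of_smul_le_mulVec (mul_inv_diagonal_apply_nonneg hA hδ) (w := δ * u)
    (fun i => mul_nonneg (hδ i).le (norm_nonneg _)) (fun h => hv0 (funext fun j => ?_))
    (by positivity) fun i => ?_
  · exact norm_eq_zero.1 ((mul_eq_zero.1 (congrFun h j)).resolve_left (hδ j).ne')
  · have hδs : δ i * s / K ≤ s := (div_le_iff₀ hK0).2 (by nlinarith [hK i])
    rw [hCw, Pi.smul_apply, smul_eq_mul, div_mul_eq_mul_div, div_le_iff₀' hβ]
    calc (1 + s / K) * (δ * u) i = (δ i + δ i * s / K) * u i := by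
          rw [Pi.mul_apply]; ring
      _ ≤ (s + δ i) * u i := mul_le_mul_of_nonneg_right (by linarith) (norm_nonneg _)
      _ ≤ β * (A *ᵥ u) i := hu i

theorem mul_sub_one_le_specRealBound (hN : 0 < N) (hA : ∀ i j, 0 ≤ A i j) (hδ : ∀ j, 0 < δ j)
    (hβ : 0 ≤ β) {m : ℝ} (hm : ∀ i, m ≤ δ i) (hr : 1 ≤ β * specRadius (A * (diagonal δ)⁻¹)) :
    m * (β * specRadius (A * (diagonal δ)⁻¹) - 1) ≤ specRealBound (-diagonal δ + β • A) := by
  set ρ := specRadius (A * (diagonal δ)⁻¹)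
  obtain ⟨u, hu, hu0, hCu⟩ :=
    exists_nonneg_specRadius_smul_le_mulVec hN (mul_inv_diagonal_apply_nonneg hA hδ)
  refine le_specRealBound_of_smul_le_mulVec (neg_diagonal_add_smul_apply_nonneg hA hβ)
    (x := δ⁻¹ * u) (fun i => mul_nonneg (inv_nonneg.2 (hδ i).le) (hu i))
    (fun h => hu0 (funext fun j => ?_)) fun i => ?_
  · simpa [(hδ j).ne'] using congrFun h j
  · have hMx : ((-diagonal δ + β • A) *ᵥ (δ⁻¹ * u)) i =
        -u i + β * ((A * (diagonal δ)⁻¹) *ᵥ u) i := by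
      have hDu : diagonal δ⁻¹ *ᵥ u = δ⁻¹ * u := funext fun j => mulVec_diagonal _ _ _
      rw [add_mulVec, neg_mulVec, smul_mulVec, inv_diagonal_of_ne_zero fun i => (hδ i).ne',
        ← mulVec_mulVec, hDu]
      simp [mulVec_diagonal, (hδ i).ne']
    have hmδ : m * (δ i)⁻¹ ≤ 1 := by
      rw [← div_eq_mul_inv]
      exact div_le_one_of_le₀ (hm i) (hδ i).le
    rw [hMx, Pi.smul_apply, smul_eq_mul, Pi.mul_apply, Pi.inv_apply]
    calc m * (β * ρ - 1) * ((δ i)⁻¹ * u i) = (β * ρ - 1) * (m * (δ i)⁻¹) * u i := by ring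
      _ ≤ (β * ρ - 1) * u i := by
          refine mul_le_mul_of_nonneg_right ?_ (hu i)
          exact mul_le_of_le_one_right (by linarith) hmδ
      _ = -u i + β * (ρ * u i) := by ring
      _ ≤ -u i + β * ((A * (diagonal δ)⁻¹) *ᵥ u) i := by gcongr; exact hCu i

end Threshold

theorem sign_sub_one_eq_of_bounds {s r a b : ℝ} (ha : 0 < a) (hb : 0 < b)
    (h₁ : 0 ≤ s → 1 + s / a ≤ r) (h₂ : 1 ≤ r → b * (r - 1) ≤ s) :
    (s < 0 ↔ r < 1) ∧ (s = 0 ↔ r = 1) := by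
  have hpos : 0 < s → 1 < r := fun hs => by linarith [h₁ hs.le, div_pos hs ha]
  have hnonneg : 1 ≤ r → 0 ≤ s := fun hr => by nlinarith [h₂ hr]
  have hpos' : 1 < r → 0 < s := fun hr => by nlinarith [h₂ hr.le]
  have hnonneg' : 0 ≤ s → 1 ≤ r := fun hs => by linarith [h₁ hs, div_nonneg hs ha.le]
  refine ⟨⟨fun hs => ?_, fun hr => ?_⟩, ⟨fun hs => ?_, fun hr => ?_⟩⟩
  · by_contra! hr; linarith [hnonneg hr]
  · by_contra! hs; linarith [hnonneg' hs]
  · rcases (hnonneg' hs.ge).eq_or_lt with hr | hr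
    · exact hr.symm
    · linarith [hpos' hr]
  · rcases (hnonneg hr.ge).eq_or_lt with hs | hs
    · exact hs.symm
    · linarith [hpos hs]

theorem metzler_threshold_general
    (N : ℕ) (hN : 0 < N)
    (A : Matrix (Fin N) (Fin N) ℝ)
    (hA : ∀ i j, 0 ≤ A i j)
    (δ : Fin N → ℝ) (hδ : ∀ j, 0 < δ j)
    (β : ℝ) (hβ : 0 < β) :
    (specRealBound (-(Matrix.diagonal δ) + β • A) < 0 ↔
        β * specRadius (A * (Matrix.diagonal δ)⁻¹) < 1) ∧
    (specRealBound (-(Matrix.diagonal δ) + β • A) = 0 ↔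
        β * specRadius (A * (Matrix.diagonal δ)⁻¹) = 1) := by
  have : Nonempty (Fin N) := ⟨⟨0, hN⟩⟩
  obtain ⟨imin, himin⟩ := Finite.exists_min δ
  obtain ⟨imax, himax⟩ := Finite.exists_max δ
  exact sign_sub_one_eq_of_bounds (hδ imax) (hδ imin)
    (one_add_specRealBound_div_le hN hA hδ hβ himax)
    (mul_sub_one_le_specRealBound hN hA hδ hβ.le himin)

/-- For irreducible nonnegative `A`, positive diagonal `D` and `β̄ > 0`,
the Metzler matrix `-D + β̄ A` has negative (resp. zero) leading eigenvalue iff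
`β̄ ρ(A D⁻¹) < 1` (resp. `= 1`). -/
theorem metzler_threshold
    (N : ℕ) (hN : 0 < N)
    (A : Matrix (Fin N) (Fin N) ℝ)
    (hA : ∀ i j, 0 ≤ A i j) (hirr : MatIrreducible A)
    (δ : Fin N → ℝ) (hδ : ∀ j, 0 < δ j)
    (β : ℝ) (hβ : 0 < β) :
    (specRealBound (-(Matrix.diagonal δ) + β • A) < 0 ↔
        β * specRadius (A * (Matrix.diagonal δ)⁻¹) < 1) ∧
    (specRealBound (-(Matrix.diagonal δ) + β • A) = 0 ↔
        β * specRadius (A * (Matrix.diagonal δ)⁻¹) = 1) :=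
  metzler_threshold_general N hN A hA δ hδ β hβ
end

section
/- Let α : [0,1] → (0,1] be C¹ with α'(p) < 0 on (0,1), let δ > 0, β̄ > δ. For each s ∈ [0,1], let p*(s) ∈ (0,1) satisfy β̄ γ(p*(s), s)(1 − p*(s)) = δ where γ(p,s) = (1−s) + s α(p). Then for any p* ∈ (0,1) and s ∈ (0,1), the implicit-function derivative dp*/ds = (1−p*)(1−α(p*)) / ( s(α'(p*)(1−p*) + (1 − α(p*))) − 1 ) is nonpositive; in particular the denominator is negative whenever α'(p*) < 0. -/
open Set

/-- in the homotopy `γ(p,s) = (1-s) + s α(p)` between SIS and actSIS,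
the implicit-function derivative `dp*/ds` is nonpositive; in particular its
denominator is negative whenever `α'(p*) < 0`. -/
theorem actSIS_homotopy_derivative_nonpositive
    (α α' : ℝ → ℝ)
    (hderiv : ∀ p ∈ Ioo (0:ℝ) 1, HasDerivAt α (α' p) p)
    (hC1 : ContinuousOn α' (Ioo (0:ℝ) 1))
    (hα'neg : ∀ p ∈ Ioo (0:ℝ) 1, α' p < 0)
    (hαrange : ∀ p ∈ Icc (0:ℝ) 1, α p ∈ Ioc (0:ℝ) 1)
    (δ β : ℝ) (hδ : 0 < δ) (hβ : δ < β) :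
    ∀ p ∈ Ioo (0:ℝ) 1, ∀ s ∈ Ioo (0:ℝ) 1,
      s * (α' p * (1 - p) + (1 - α p)) - 1 < 0 ∧
      (1 - p) * (1 - α p) / (s * (α' p * (1 - p) + (1 - α p)) - 1) ≤ 0 := by
  intro p hp s hs
  have hpI : p ∈ Icc (0:ℝ) 1 := ⟨hp.1.le, hp.2.le⟩
  have hα := hαrange p hpI
  have h1p : 0 < 1 - p := by linarith [hp.2]
  have h' : α' p < 0 := hα'neg p hp
  have hterm : α' p * (1 - p) < 0 := mul_neg_of_neg_of_pos h' h1p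
  have h1α : 0 ≤ 1 - α p := by linarith [hα.2]
  have hsum : α' p * (1 - p) + (1 - α p) < 1 := by linarith [hα.1]
  have hden : s * (α' p * (1 - p) + (1 - α p)) - 1 < 0 := by
    rcases le_or_gt (α' p * (1 - p) + (1 - α p)) 0 with h | h
    · nlinarith [hs.1, hs.2]
    · nlinarith [hs.1, hs.2]
  refine ⟨hden, div_nonpos_of_nonneg_of_nonpos (by positivity) hden.le⟩
end

section
/- Let α : [0,1] → (0,1] be continuous and strictly decreasing on (0,1), δ > 0, β̄ > δ. Let p*_SIS = 1 − δ/β̄ and let p*_actSIS ∈ (0,1) be any solution of β̄ α(p)(1 − p) = δ. Then p*_SIS ≥ p*_actSIS. -/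
open Set

/-- risk aversion lowers the endemic equilibrium of the well-mixed
model: `p*_SIS ≥ p*_actSIS`. -/
theorem risk_aversion_lowers_EE_wellmixed
    (α : ℝ → ℝ)
    (hcont : ContinuousOn α (Icc (0:ℝ) 1))
    (hrange : ∀ p ∈ Icc (0:ℝ) 1, α p ∈ Ioc (0:ℝ) 1)
    (hanti : StrictAntiOn α (Ioo (0:ℝ) 1))
    (δ β : ℝ) (hδ : 0 < δ) (hβ : δ < β)
    (pSIS pact : ℝ)
    (hpSIS : pSIS = 1 - δ/β)
    (hpact : pact ∈ Ioo (0:ℝ) 1)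
    (heq : β * α pact * (1 - pact) = δ) :
    pSIS ≥ pact := by
  have hβ0 : (0:ℝ) < β := hδ.trans hβ
  obtain ⟨h1, h2⟩ := hpact
  have hα := hrange pact ⟨h1.le, h2.le⟩
  have hα1 : α pact ≤ 1 := hα.2
  have hα0 : 0 < α pact := hα.1
  have h1p : 0 < 1 - pact := by linarith
  have key : δ ≤ β * (1 - pact) := by nlinarith
  have : δ / β ≤ 1 - pact := (div_le_iff₀ hβ0).2 (by linarith [mul_comm β (1 - pact)])
  rw [hpSIS]; linarith
end

section
/- For a connected d-regular graph A and d̂-regular graph Â, common δ > 0 and risk-aversion strategy α, and uniform endemic level p* satisfying β̄ d (1−p*)α(p*) = δ, the leading eigenvalue of the effective Jacobian J_eff(p*) = −δ(1 + β̄ d p* α(p*)) I + (δ/d) A + (δ/d̂)(α'(p*)/α(p*)) p* Â satisfies λ_max(J_eff(p*)) = δ g(p*)/(1 − p*), where g(p) = −δp + (1−p)(λ_max((1/d)A + (1/d̂)(α'(p)/α(p)) p Â) − 1). In particular, sign(λ_max(J_eff(p*))) = sign(g(p*)). -/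
open Set
open scoped Pointwise

open Pointwise in

lemma spec_nonempty {N : ℕ} (hN : 0 < N) (B : Matrix (Fin N) (Fin N) ℂ) :
    (spectrum ℂ B).Nonempty := by
  have : Nontrivial (Fin N → ℂ) := by
    have : Nonempty (Fin N) := ⟨⟨0, hN⟩⟩
    infer_instance
  rw [← AlgEquiv.spectrum_eq (Matrix.toLinAlgEquiv <| Pi.basisFun ℂ (Fin N)) B]
  obtain ⟨c, hc⟩ := Module.End.exists_eigenvalue ((Matrix.toLinAlgEquiv <| Pi.basisFun ℂ (Fin N)) B)
  exact ⟨c, Module.End.hasEigenvalue_iff_mem_spectrum.mp hc⟩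

lemma key {N : ℕ} (hN : 0 < N) (M : Matrix (Fin N) (Fin N) ℝ) (c t : ℝ) (ht : 0 < t) :
    specRealBound (c • (1 : Matrix (Fin N) (Fin N) ℝ) + t • M) = c + t * specRealBound M := by
  set B := M.map (Complex.ofReal : ℝ → ℂ) with hB
  have hmap : (c • (1 : Matrix (Fin N) (Fin N) ℝ) + t • M).map (Complex.ofReal : ℝ → ℂ)
      = algebraMap ℂ (Matrix (Fin N) (Fin N) ℂ) (c : ℂ) + (t : ℂ) • B := by
    ext i j
    simp [Matrix.map_apply, Matrix.one_apply, Matrix.algebraMap_matrix_apply, hB]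
    split <;> simp
  have hspec : spectrum ℂ ((c • (1 : Matrix (Fin N) (Fin N) ℝ) + t • M).map
      (Complex.ofReal : ℝ → ℂ)) = ({(c : ℂ)} : Set ℂ) + (t : ℂ) • spectrum ℂ B := by
    have : Nontrivial (Matrix (Fin N) (Fin N) ℂ) := by
      have : Nonempty (Fin N) := ⟨⟨0, hN⟩⟩
      infer_instance
    rw [hmap, ← spectrum.singleton_add_eq,
      spectrum.smul_eq_smul (t : ℂ) B (spec_nonempty hN B)]
  have himg : Complex.re '' (({(c : ℂ)} : Set ℂ) + (t : ℂ) • spectrum ℂ B)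
      = (fun x : ℝ => c + t * x) '' (Complex.re '' spectrum ℂ B) := by
    ext x
    constructor
    · rintro ⟨z, hz, rfl⟩
      rw [Set.mem_add] at hz
      obtain ⟨a, ha, b, hb, rfl⟩ := hz
      obtain ⟨w, hw, rfl⟩ := hb
      rw [Set.mem_singleton_iff] at ha
      subst ha
      exact ⟨w.re, ⟨w, hw, rfl⟩, by simp [Complex.add_re, Complex.mul_re]⟩
    · rintro ⟨y, ⟨w, hw, rfl⟩, rfl⟩
      exact ⟨(c : ℂ) + (t : ℂ) * w, Set.add_mem_add rfl ⟨w, hw, rfl⟩,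
        by simp [Complex.add_re, Complex.mul_re]⟩
  have hne : (Complex.re '' spectrum ℂ B).Nonempty :=
    (spec_nonempty hN B).image _
  have hbdd : BddAbove (Complex.re '' spectrum ℂ B) :=
    ((B.finite_spectrum).image _).bddAbove
  have hmono : Monotone (fun x : ℝ => c + t * x) := fun a b hab => by
    simp only []
    nlinarith
  have := hmono.map_csSup_of_continuousAt (by fun_prop) hne hbdd
  rw [specRealBound, hspec, himg, ← this]
  rfl

/-- the leading eigenvalue of the effective Jacobian at the uniform
endemic level `p*` satisfies `λ_max(J_eff(p*)) = δ g(p*)/(1-p*)`, where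
`g(p) = −δp + (1−p)(λ_max((1/d)A + (1/d̂)(α'(p)/α(p))p Â) − 1)`;
in particular the two quantities have the same sign. -/
theorem effective_jacobian_leading_eigenvalue
    (N : ℕ) (hN : 0 < N)
    (A Ahat : Matrix (Fin N) (Fin N) ℝ)
    (hA : ∀ j k, 0 ≤ A j k) (hAhat : ∀ j k, 0 ≤ Ahat j k)
    (hAsym : A.IsSymm) (hAhatsym : Ahat.IsSymm)
    (d dhat : ℝ) (hd : 0 < d) (hdhat : 0 < dhat)
    (hreg : ∀ j, ∑ k, A j k = d) (hreghat : ∀ j, ∑ k, Ahat j k = dhat)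
    (δ β : ℝ) (hδ : 0 < δ) (hβ : 0 < β)
    (α : ℝ → ℝ) (α'p : ℝ)
    (pstar : ℝ) (hpstar : pstar ∈ Ioo (0:ℝ) 1)
    (hderiv : HasDerivAt α α'p pstar)
    (hαpos : 0 < α pstar) (hα'neg : α'p < 0)
    (heq : β * d * (1 - pstar) * α pstar = δ)
    (Jeff M : Matrix (Fin N) (Fin N) ℝ)
    (hM : M = (1 / d) • A + ((α'p / α pstar) * pstar / dhat) • Ahat)
    (hJeff : Jeff = (-(δ * (1 + β * d * pstar * α pstar))) •
        (1 : Matrix (Fin N) (Fin N) ℝ) + (δ / d) • A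
        + (δ / dhat * (α'p / α pstar) * pstar) • Ahat)
    (g : ℝ) (hg : g = -(δ * pstar) + (1 - pstar) * (specRealBound M - 1)) :
    specRealBound Jeff = δ * g / (1 - pstar) ∧
    Real.sign (specRealBound Jeff) = Real.sign g := by
  obtain ⟨hp0, hp1⟩ := hpstar
  have h1p : (0:ℝ) < 1 - pstar := by linarith
  set c : ℝ := -(δ * (1 + β * d * pstar * α pstar)) with hc
  have hJ : Jeff = c • (1 : Matrix (Fin N) (Fin N) ℝ) + δ • M := by
    rw [hJeff, hM, smul_add, smul_smul, smul_smul]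
    rw [show δ * (1 / d) = δ / d by ring,
      show δ * ((α'p / α pstar) * pstar / dhat) = δ / dhat * (α'p / α pstar) * pstar by ring]
    abel
  have hval : specRealBound Jeff = c + δ * specRealBound M := by
    rw [hJ, key hN M c δ hδ]
  have hmain : specRealBound Jeff = δ * g / (1 - pstar) := by
    rw [hval, eq_div_iff h1p.ne', hg]
    linear_combination (-(δ * pstar)) * heq
  refine ⟨hmain, ?_⟩
  rw [hmain]
  rcases lt_trichotomy g 0 with hg0 | hg0 | hg0
  · rw [Real.sign_of_neg hg0, Real.sign_of_neg]
    exact div_neg_of_neg_of_pos (mul_neg_of_pos_of_neg hδ hg0) h1p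
  · simp [hg0]
  · rw [Real.sign_of_pos hg0, Real.sign_of_pos]
    exact div_pos (mul_pos hδ hg0) h1p
end
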